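/- arXiv:2502.17151 — 4 statements merged into one kernel-verified Lean document; each statement's English description precedes it below -/
import Mathlib

section
/- Let g : ℝ² → ℝ be C¹ with g(0,0) = 0, of the form g(x,y) = y + Q(x,y) + Y(x,y), and suppose that on a ball of radius δ around the origin (minus the origin) one has (∂Q/∂y + ∂Y/∂y + ∂Q/∂x + ∂Y/∂x)(p) > 0. Then for any q = (q_x, q_y) with q_x = q_y, 0 < |q_y| ≤ δ: g(q) > q_y if q_y > 0, and g(q) < q_y if q_y < 0. -/
/-- Lemma 3.1(2): along the diagonal, g(x,y) = y + Q(x,y) + Y(x,y) pushes points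
away from the x-axis. -/
theorem stmt_5 (g Q Y : ℝ × ℝ → ℝ) (δ : ℝ) (hδ : 0 < δ)
    (hg : ∀ p : ℝ × ℝ, g p = p.2 + Q p + Y p)
    (hQ : ContDiff ℝ 1 Q) (hY : ContDiff ℝ 1 Y)
    (h0 : Q (0, 0) + Y (0, 0) = 0)
    (hder : ∀ t : ℝ, t ≠ 0 → |t| ≤ δ →
      0 < fderiv ℝ Q (t, t) (1, 1) + fderiv ℝ Y (t, t) (1, 1)) :
    ∀ q : ℝ × ℝ, q.1 = q.2 → 0 < |q.2| → |q.2| ≤ δ →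
      (0 < q.2 → q.2 < g q) ∧ (q.2 < 0 → g q < q.2) := by
  set f : ℝ → ℝ := fun t => Q (t, t) + Y (t, t) with hf
  have hderiv : ∀ t : ℝ,
      HasDerivAt f (fderiv ℝ Q (t, t) (1, 1) + fderiv ℝ Y (t, t) (1, 1)) t := by
    intro t
    have hφ : HasDerivAt (fun t : ℝ => ((t, t) : ℝ × ℝ)) (1, 1) t :=
      HasDerivAt.prodMk (hasDerivAt_id t) (hasDerivAt_id t)
    exact (((hQ.differentiable one_ne_zero).differentiableAt.hasFDerivAt.comp_hasDerivAt t hφ).add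
      ((hY.differentiable one_ne_zero).differentiableAt.hasFDerivAt.comp_hasDerivAt t hφ))
  have hcont : Continuous f :=
    ((hQ.continuous.comp (continuous_id.prodMk continuous_id)).add
      (hY.continuous.comp (continuous_id.prodMk continuous_id)))
  rintro ⟨qx, qx⟩ hq hqy hqδ
  simp only at hq hqy hqδ
  subst hq
  rw [hg]
  have hf0 : f 0 = 0 := h0
  constructor
  · intro hpos
    have hmono : StrictMonoOn f (Set.Icc 0 qx) := by
      apply strictMonoOn_of_deriv_pos (convex_Icc 0 qx) hcont.continuousOn
      intro x hx
      rw [interior_Icc] at hx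
      rw [(hderiv x).deriv]
      exact hder x (ne_of_gt hx.1) (by
        rw [abs_of_pos hx.1]
        exact le_trans hx.2.le (le_trans (le_abs_self qx) hqδ))
    have := hmono (Set.left_mem_Icc.2 hpos.le) (Set.right_mem_Icc.2 hpos.le) hpos
    rw [hf0] at this
    simp only [f] at this
    simp only
    linarith
  · intro hneg
    have hmono : StrictMonoOn f (Set.Icc qx 0) := by
      apply strictMonoOn_of_deriv_pos (convex_Icc qx 0) hcont.continuousOn
      intro x hx
      rw [interior_Icc] at hx
      rw [(hderiv x).deriv]
      exact hder x (ne_of_lt hx.2) (by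
        rw [abs_of_neg hx.2]
        rw [abs_of_neg hneg] at hqδ
        linarith [hx.1])
    have := hmono (Set.left_mem_Icc.2 hneg.le) (Set.right_mem_Icc.2 hneg.le) hneg
    rw [hf0] at this
    simp only [f] at this
    linarith
end

section
/- Let F = (f,g) : ℝ² → ℝ² be C¹ with F(x,y) = (x − P + X, y + Q + Y), and suppose for a constant α > 1 that at a point p the partial derivatives satisfy 0 < (∂₁P − ∂₁X ± α(∂₂P − ∂₂X))(p) < 1 and 0 < (α(∂₂Q + ∂₂Y) ± (∂₁Q + ∂₁Y))(p) < 1. Then the derivative D_pF maps the cone C^u(α) = {(u,v) : |v| ≥ α|u|} into itself. -/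
lemma clm_eval (L : ℝ × ℝ →L[ℝ] ℝ) (u v : ℝ) :
    L (u, v) = u * L (1, 0) + v * L (0, 1) := by
  have h : (u, v) = u • ((1:ℝ), (0:ℝ)) + v • ((0:ℝ), (1:ℝ)) := by
    simp [Prod.ext_iff]
  rw [h, map_add, map_smul, map_smul, smul_eq_mul, smul_eq_mul]

set_option maxHeartbeats 1000000 in
/-- Lemma 3.1(3), cone invariance: under the stated sign conditions on the partial
derivatives at p, the differential of F = (x − P + X, y + Q + Y) at p maps the
unstable cone C^u(α) = {(u,v) : |v| ≥ α|u|} into itself. -/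
theorem stmt_6 (P Q X Y : ℝ × ℝ → ℝ) (F : ℝ × ℝ → ℝ × ℝ)
    (hF : ∀ z : ℝ × ℝ, F z = (z.1 - P z + X z, z.2 + Q z + Y z))
    (p : ℝ × ℝ) (hFd : DifferentiableAt ℝ F p)
    (α : ℝ) (hα : 1 < α)
    (h1 : ∀ s : ℝ, s = 1 ∨ s = -1 →
      0 < (fderiv ℝ P p (1, 0) - fderiv ℝ X p (1, 0))
          + s * α * (fderiv ℝ P p (0, 1) - fderiv ℝ X p (0, 1)) ∧
      (fderiv ℝ P p (1, 0) - fderiv ℝ X p (1, 0))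
          + s * α * (fderiv ℝ P p (0, 1) - fderiv ℝ X p (0, 1)) < 1)
    (h2 : ∀ s : ℝ, s = 1 ∨ s = -1 →
      0 < α * (fderiv ℝ Q p (0, 1) + fderiv ℝ Y p (0, 1))
          + s * (fderiv ℝ Q p (1, 0) + fderiv ℝ Y p (1, 0)) ∧
      α * (fderiv ℝ Q p (0, 1) + fderiv ℝ Y p (0, 1))
          + s * (fderiv ℝ Q p (1, 0) + fderiv ℝ Y p (1, 0)) < 1) :
    ∀ u v : ℝ, α * |u| ≤ |v| →
      α * |(fderiv ℝ F p (u, v)).1| ≤ |(fderiv ℝ F p (u, v)).2| := by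
  intro u v huv
  set a := fderiv ℝ P p (1, 0) - fderiv ℝ X p (1, 0) with ha
  set b := fderiv ℝ P p (0, 1) - fderiv ℝ X p (0, 1) with hb
  set c := fderiv ℝ Q p (1, 0) + fderiv ℝ Y p (1, 0) with hc
  set d := fderiv ℝ Q p (0, 1) + fderiv ℝ Y p (0, 1) with hd
  clear_value a b c d
  -- auxiliary functions
  set G : ℝ × ℝ → ℝ := fun z => z.1 - (F z).1 with hGdef
  set H : ℝ × ℝ → ℝ := fun z => (F z).2 - z.2 with hHdef
  have hGeq : G = fun z => P z - X z := by
    funext z; simp [hGdef, hF z]; ring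
  have hHeq : H = fun z => Q z + Y z := by
    funext z; simp [hHdef, hF z]; ring
  have hG : DifferentiableAt ℝ G p := differentiableAt_fst.sub hFd.fst
  have hH : DifferentiableAt ℝ H p := hFd.snd.sub differentiableAt_snd
  -- formula for fderiv G
  have hGform : ∀ w₁ w₂ : ℝ, fderiv ℝ G p (w₁, w₂) = w₁ * a + w₂ * b := by
    by_cases hP : DifferentiableAt ℝ P p
    · have hX : DifferentiableAt ℝ X p := by
        have : X = fun z => P z - G z := by
          funext z
          have := congrFun hGeq z
          linarith [this]
        rw [this]; exact hP.sub hG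
      intro w₁ w₂
      have : fderiv ℝ G p = fderiv ℝ P p - fderiv ℝ X p := by
        rw [hGeq] -- careful: hGeq rewrites G; but goal mentions fderiv ℝ G p
        exact fderiv_sub hP hX
      rw [this]
      simp only [ContinuousLinearMap.sub_apply]
      rw [clm_eval (fderiv ℝ P p), clm_eval (fderiv ℝ X p), ha, hb]
      ring
    · exfalso
      have hX : ¬ DifferentiableAt ℝ X p := by
        intro hX
        apply hP
        have : P = fun z => G z + X z := by
          funext z
          have := congrFun hGeq z
          linarith [this]
        rw [this]; exact hG.add hX
      have e1 : fderiv ℝ P p = 0 := fderiv_zero_of_not_differentiableAt hP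
      have e2 : fderiv ℝ X p = 0 := fderiv_zero_of_not_differentiableAt hX
      have := (h1 1 (Or.inl rfl)).1
      rw [ha, hb, e1, e2] at this
      norm_num at this
  have hHform : ∀ w₁ w₂ : ℝ, fderiv ℝ H p (w₁, w₂) = w₁ * c + w₂ * d := by
    by_cases hQ : DifferentiableAt ℝ Q p
    · have hY : DifferentiableAt ℝ Y p := by
        have : Y = fun z => H z - Q z := by
          funext z
          have := congrFun hHeq z
          linarith [this]
        rw [this]; exact hH.sub hQ
      intro w₁ w₂
      have : fderiv ℝ H p = fderiv ℝ Q p + fderiv ℝ Y p := by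
        rw [hHeq]
        exact fderiv_add hQ hY
      rw [this]
      simp only [ContinuousLinearMap.add_apply]
      rw [clm_eval (fderiv ℝ Q p), clm_eval (fderiv ℝ Y p), hc, hd]
      ring
    · exfalso
      have hY : ¬ DifferentiableAt ℝ Y p := by
        intro hY
        apply hQ
        have : Q = fun z => H z - Y z := by
          funext z
          have := congrFun hHeq z
          linarith [this]
        rw [this]; exact hH.sub hY
      have e1 : fderiv ℝ Q p = 0 := fderiv_zero_of_not_differentiableAt hQ
      have e2 : fderiv ℝ Y p = 0 := fderiv_zero_of_not_differentiableAt hY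
      have := (h2 1 (Or.inl rfl)).1
      rw [hc, hd, e1, e2] at this
      norm_num at this
  -- compute fderiv F in terms of G, H
  have hL1 : HasFDerivAt (fun z : ℝ × ℝ => (F z).1)
      (ContinuousLinearMap.fst ℝ ℝ ℝ - fderiv ℝ G p) p := by
    have e : (fun z : ℝ × ℝ => (F z).1) = fun z => z.1 - G z := by
      funext z; simp [hGdef]
    rw [e]
    exact (hasFDerivAt_fst).sub hG.hasFDerivAt
  have hL1' : HasFDerivAt (fun z : ℝ × ℝ => (F z).1)
      ((ContinuousLinearMap.fst ℝ ℝ ℝ).comp (fderiv ℝ F p)) p :=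
    hFd.hasFDerivAt.fst
  have hE1 : ((fderiv ℝ F p) (u, v)).1 = u - fderiv ℝ G p (u, v) := by
    have := hL1'.unique hL1
    have := congrFun (congrArg DFunLike.coe this) (u, v)
    simpa using this
  have hL2 : HasFDerivAt (fun z : ℝ × ℝ => (F z).2)
      (ContinuousLinearMap.snd ℝ ℝ ℝ + fderiv ℝ H p) p := by
    have e : (fun z : ℝ × ℝ => (F z).2) = fun z => z.2 + H z := by
      funext z; simp [hHdef]
    rw [e]
    exact (hasFDerivAt_snd).add hH.hasFDerivAt
  have hL2' : HasFDerivAt (fun z : ℝ × ℝ => (F z).2)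
      ((ContinuousLinearMap.snd ℝ ℝ ℝ).comp (fderiv ℝ F p)) p :=
    hFd.hasFDerivAt.snd
  have hE2 : ((fderiv ℝ F p) (u, v)).2 = v + fderiv ℝ H p (u, v) := by
    have := hL2'.unique hL2
    have := congrFun (congrArg DFunLike.coe this) (u, v)
    simpa using this
  rw [hE1, hE2, hGform u v, hHform u v]
  -- now pure algebra
  have q1 := h1 1 (Or.inl rfl)
  have q2 := h1 (-1) (Or.inr rfl)
  have q3 := h2 1 (Or.inl rfl)
  have q4 := h2 (-1) (Or.inr rfl)
  have hab1 : 0 < a + α * b := by linarith [q1.1]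
  have hab2 : a + α * b < 1 := by linarith [q1.2]
  have hab3 : 0 < a - α * b := by linarith [q2.1]
  have hab4 : a - α * b < 1 := by linarith [q2.2]
  have hcd1 : 0 < α * d + c := by linarith [q3.1]
  have hcd3 : 0 < α * d - c := by linarith [q4.1]
  have hbabs : α * |b| < a := by
    rcases abs_cases b with ⟨h, _⟩ | ⟨h, _⟩ <;> rw [h] <;> nlinarith
  have hcabs : |c| < α * d := by
    rcases abs_cases c with ⟨h, _⟩ | ⟨h, _⟩ <;> rw [h] <;> linarith
  have ha1 : a < 1 := by nlinarith [abs_nonneg b, hbabs]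
  have hd0 : 0 < d := by
    have h' : 0 < α * d := (abs_nonneg c).trans_lt hcabs
    rcases mul_pos_iff.mp h' with ⟨_, h⟩ | ⟨h, _⟩
    · exact h
    · linarith
  have hα0 : (0:ℝ) < α := by linarith
  -- bound LHS
  have lhs_bd : |u - (u * a + v * b)| ≤ (1 - a) * |u| + |b| * |v| := by
    have : u - (u * a + v * b) = (1 - a) * u + (-b) * v := by ring
    rw [this]
    calc |(1 - a) * u + (-b) * v| ≤ |(1 - a) * u| + |(-b) * v| := abs_add_le _ _
      _ = (1 - a) * |u| + |b| * |v| := by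
          rw [abs_mul, abs_mul, abs_of_nonneg (by linarith : (0:ℝ) ≤ 1 - a), abs_neg]
  have rhs_bd : (1 + d) * |v| - |c| * |u| ≤ |v + (u * c + v * d)| := by
    have e : (1 + d) * v = (v + (u * c + v * d)) + (-c) * u := by ring
    calc (1 + d) * |v| - |c| * |u|
        = |(1 + d) * v| - |(-c) * u| := by
          rw [abs_mul, abs_mul, abs_of_nonneg (by linarith : (0:ℝ) ≤ 1 + d), abs_neg]
      _ ≤ |v + (u * c + v * d)| := by
          rw [e]
          calc |(v + (u * c + v * d)) + (-c) * u| - |(-c) * u|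
              ≤ (|v + (u * c + v * d)| + |(-c) * u|) - |(-c) * u| := by
                linarith [abs_add_le (v + (u * c + v * d)) ((-c) * u)]
            _ = |v + (u * c + v * d)| := by ring
  have hu0 : (0:ℝ) ≤ |u| := abs_nonneg u
  have hv0 : (0:ℝ) ≤ |v| := abs_nonneg v
  have key : α * ((1 - a) * |u| + |b| * |v|) ≤ (1 + d) * |v| - |c| * |u| := by
    nlinarith [mul_nonneg (sub_nonneg.2 huv) (by linarith : (0:ℝ) ≤ 1 - a),
      mul_nonneg hu0 (by linarith : (0:ℝ) ≤ α * d - |c|),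
      mul_nonneg hv0 (by linarith : (0:ℝ) ≤ a - α * |b|),
      mul_nonneg (sub_nonneg.2 huv) hd0.le]
  calc α * |u - (u * a + v * b)| ≤ α * ((1 - a) * |u| + |b| * |v|) := by
        exact mul_le_mul_of_nonneg_left lhs_bd (le_of_lt hα0)
    _ ≤ (1 + d) * |v| - |c| * |u| := key
    _ ≤ |v + (u * c + v * d)| := rhs_bd
end

section
/- Let P, Q, X, Y : ℝ² → ℝ be C¹ and suppose at a point (x,y): |∂P/∂y| < (1−ε)·∂P/∂x, |∂Q/∂x| < (1−ε)·∂Q/∂y, |∂X/∂x| + |∂X/∂y| < (ε/2)·|∂P/∂x|, and |∂Y/∂x| + |∂Y/∂y| < (ε/2)·|∂Q/∂y|, all partials evaluated at (x,y), for some ε ∈ (0,1), with ∂P/∂x > 0 and ∂Q/∂y > 0 there. Let DF(x,y) = [[1 − ∂₁P + ∂₁X, −∂₂P + ∂₂X],[∂₁Q + ∂₁Y, 1 + ∂₂Q + ∂₂Y]] and additionally assume 0 < ∂₁P ≤ 1, so that 1 − ∂₁P ∈ [0,1). Then for every ν with 1 − ε/2 < ν ≤ 1, the image DF(x,y)·(ν,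 1)ᵀ = (u, v) satisfies |u| < ν and |v| > 1. -/
/-- The cone-field invariance computation in the proof of Theorem 1.2: under the
stated smallness conditions on the partial derivatives at a point z, the Jacobian
DF(z) = [[1 − ∂₁P + ∂₁X, −∂₂P + ∂₂X], [∂₁Q + ∂₁Y, 1 + ∂₂Q + ∂₂Y]] maps any vector
(ν, 1) with 1 − ε/2 < ν ≤ 1 to a vector (u, v) with |u| < ν and |v| > 1. -/
theorem stmt_11 (P Q X Y : ℝ × ℝ → ℝ)
    (hP : ContDiff ℝ 1 P) (hQ : ContDiff ℝ 1 Q)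
    (hX : ContDiff ℝ 1 X) (hY : ContDiff ℝ 1 Y)
    (z : ℝ × ℝ) (ε : ℝ) (hε0 : 0 < ε) (hε1 : ε < 1)
    (hPx : 0 < fderiv ℝ P z (1, 0)) (hQy : 0 < fderiv ℝ Q z (0, 1))
    (hPxle : fderiv ℝ P z (1, 0) ≤ 1)
    (hPy : |fderiv ℝ P z (0, 1)| < (1 - ε) * fderiv ℝ P z (1, 0))
    (hQx : |fderiv ℝ Q z (1, 0)| < (1 - ε) * fderiv ℝ Q z (0, 1))
    (hXsmall : |fderiv ℝ X z (1, 0)| + |fderiv ℝ X z (0, 1)| < (ε / 2) * |fderiv ℝ P z (1, 0)|)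
    (hYsmall : |fderiv ℝ Y z (1, 0)| + |fderiv ℝ Y z (0, 1)| < (ε / 2) * |fderiv ℝ Q z (0, 1)|) :
    ∀ ν : ℝ, 1 - ε / 2 < ν → ν ≤ 1 →
      |(1 - fderiv ℝ P z (1, 0) + fderiv ℝ X z (1, 0)) * ν
        + (-fderiv ℝ P z (0, 1) + fderiv ℝ X z (0, 1))| < ν ∧
      1 < |(fderiv ℝ Q z (1, 0) + fderiv ℝ Y z (1, 0)) * ν
        + (1 + fderiv ℝ Q z (0, 1) + fderiv ℝ Y z (0, 1))| := by
  intro nu h1 h2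
  set a := fderiv ℝ P z (1, 0) with ha
  set b := fderiv ℝ P z (0, 1) with hb
  set c := fderiv ℝ Q z (1, 0) with hc
  set d := fderiv ℝ Q z (0, 1) with hd
  set x1 := fderiv ℝ X z (1, 0)
  set x2 := fderiv ℝ X z (0, 1)
  set y1 := fderiv ℝ Y z (1, 0)
  set y2 := fderiv ℝ Y z (0, 1)
  have hnu0 : 0 < nu := by linarith
  have hb1 : b ≤ |b| := le_abs_self b
  have hb2 : -|b| ≤ b := neg_abs_le b
  have hc1 : c ≤ |c| := le_abs_self c
  have hc2 : -|c| ≤ c := neg_abs_le c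
  have hx21 : x2 ≤ |x2| := le_abs_self x2
  have hx22 : -|x2| ≤ x2 := neg_abs_le x2
  have hy21 : y2 ≤ |y2| := le_abs_self y2
  have hy22 : -|y2| ≤ y2 := neg_abs_le y2
  have haa : |a| = a := abs_of_pos hPx
  have hdd : |d| = d := abs_of_pos hQy
  rw [haa] at hXsmall
  rw [hdd] at hYsmall
  -- product facts
  have hx1nu : x1 * nu ≤ |x1| := by
    calc x1 * nu ≤ |x1| * nu := mul_le_mul_of_nonneg_right (le_abs_self x1) hnu0.le
      _ ≤ |x1| * 1 := mul_le_mul_of_nonneg_left h2 (abs_nonneg x1)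
      _ = |x1| := mul_one _
  have hx1nu' : -|x1| ≤ x1 * nu := by
    calc -|x1| = -|x1| * 1 := (mul_one _).symm
      _ ≤ -|x1| * nu := by
          apply mul_le_mul_of_nonpos_left h2 (neg_nonpos_of_nonneg (abs_nonneg x1))
      _ ≤ x1 * nu := mul_le_mul_of_nonneg_right (neg_abs_le x1) hnu0.le
  have hy1nu : y1 * nu ≤ |y1| := by
    calc y1 * nu ≤ |y1| * nu := mul_le_mul_of_nonneg_right (le_abs_self y1) hnu0.le
      _ ≤ |y1| * 1 := mul_le_mul_of_nonneg_left h2 (abs_nonneg y1)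
      _ = |y1| := mul_one _
  have hy1nu' : -|y1| ≤ y1 * nu := by
    calc -|y1| = -|y1| * 1 := (mul_one _).symm
      _ ≤ -|y1| * nu := by
          apply mul_le_mul_of_nonpos_left h2 (neg_nonpos_of_nonneg (abs_nonneg y1))
      _ ≤ y1 * nu := mul_le_mul_of_nonneg_right (neg_abs_le y1) hnu0.le
  have hcnu : c * nu ≤ |c| := by
    calc c * nu ≤ |c| * nu := mul_le_mul_of_nonneg_right (le_abs_self c) hnu0.le
      _ ≤ |c| * 1 := mul_le_mul_of_nonneg_left h2 (abs_nonneg c)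
      _ = |c| := mul_one _
  have hcnu' : -|c| ≤ c * nu := by
    calc -|c| = -|c| * 1 := (mul_one _).symm
      _ ≤ -|c| * nu := by
          apply mul_le_mul_of_nonpos_left h2 (neg_nonpos_of_nonneg (abs_nonneg c))
      _ ≤ c * nu := mul_le_mul_of_nonneg_right (neg_abs_le c) hnu0.le
  have hanu1 : (1 - ε / 2) * a < nu * a := mul_lt_mul_of_pos_right h1 hPx
  have hanu2 : a * nu ≤ 1 * nu := mul_le_mul_of_nonneg_right hPxle hnu0.le
  have hdnu1 : (1 - ε / 2) * d < nu * d := mul_lt_mul_of_pos_right h1 hQy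
  constructor
  · rw [abs_lt]
    constructor
    · linarith [hx1nu', hb1, hx22, hanu1, hanu2]
    · linarith [hx1nu, hb2, hx21, hanu1, hanu2]
  · have key : 1 < (c + y1) * nu + (1 + d + y2) := by
      linarith [hcnu', hy1nu', hy22, hdnu1]
    calc (1:ℝ) < (c + y1) * nu + (1 + d + y2) := key
      _ ≤ |(c + y1) * nu + (1 + d + y2)| := le_abs_self _
end

section
/- Let F : ℝ² → ℝ² be C¹ of the form F(x,y) = (x − P(x,y) + X(x,y), y + Q(x,y) + Y(x,y)), where P and Q are homogeneous polynomials of degrees 2k+1 and 2k′+1 respectively (k, k′ ≥ 1), and X, Y are C¹ with X(0,0) = Y(0,0) = 0 and with first partial derivatives of order o(‖(x,y)‖^{2k}) and o(‖(x,y)‖^{2k′}) respectively. Suppose the homogeneous forms ∂P/∂x, ∂Q/∂y, ∂P/∂x + ∂P/∂y, ∂P/∂x − ∂P/∂y, ∂Q/∂y + ∂Q/∂x, and ∂Q/∂y − ∂Q/∂x are all positive definite (positive on nonzero vectors). Then there exists a neighborhood N of the origin such that for every p ∈ N \ {(0,0)} and every λ ∈ [−1,1]: 0 < (∂P/∂x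 − ∂X/∂x + λ∂P/∂y − λ∂X/∂y)(p) < 1 and 0 < (∂Q/∂y + ∂Y/∂y + λ∂Q/∂x + λ∂Y/∂x)(p) < 1. -/
open Filter Topology Asymptotics


lemma fderiv_homog {P : ℝ × ℝ → ℝ} {n : ℕ} (hP : Differentiable ℝ P)
    (hhom : ∀ t : ℝ, ∀ z, P (t • z) = t ^ (n + 1) * P z)
    {t : ℝ} (ht : t ≠ 0) (z v : ℝ × ℝ) :
    fderiv ℝ P (t • z) v = t ^ n * fderiv ℝ P z v := by
  have hsm : HasFDerivAt (fun w : ℝ × ℝ => t • w)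
      (t • ContinuousLinearMap.id ℝ (ℝ × ℝ)) z := (hasFDerivAt_id z).const_smul t
  have h1 : HasFDerivAt (fun w => P (t • w))
      ((fderiv ℝ P (t • z)).comp (t • ContinuousLinearMap.id ℝ (ℝ × ℝ))) z :=
    ((hP (t • z)).hasFDerivAt).comp z hsm
  have h2 : HasFDerivAt (fun w => t ^ (n + 1) * P w)
      (t ^ (n + 1) • fderiv ℝ P z) z := by
    exact ((hP z).hasFDerivAt).const_smul (t ^ (n + 1))
  have heq : (fun w => P (t • w)) = fun w => t ^ (n + 1) * P w := funext fun w => hhom t w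
  rw [heq] at h1
  have h4 := h1.unique h2
  have h5 := congrArg (fun L : (ℝ × ℝ) →L[ℝ] ℝ => L v) h4
  simp only [ContinuousLinearMap.coe_comp', Function.comp_apply,
    ContinuousLinearMap.smul_apply, ContinuousLinearMap.coe_id',
    id_eq, map_smul, smul_eq_mul] at h5
  have : t * fderiv ℝ P (t • z) v = t * (t ^ n * fderiv ℝ P z v) := by
    rw [h5]; ring
  exact mul_left_cancel₀ ht this

lemma key (n : ℕ) (hn : 1 ≤ n) (A B x1 x2 : ℝ × ℝ → ℝ)
    (hAc : Continuous A) (hBc : Continuous B)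
    (hAh : ∀ t : ℝ, t ≠ 0 → ∀ z, A (t • z) = t ^ n * A z)
    (hBh : ∀ t : ℝ, t ≠ 0 → ∀ z, B (t • z) = t ^ n * B z)
    (hpos1 : ∀ v : ℝ × ℝ, v ≠ 0 → 0 < A v + B v)
    (hpos2 : ∀ v : ℝ × ℝ, v ≠ 0 → 0 < A v - B v)
    (hsm : ∀ ε : ℝ, 0 < ε → ∀ᶠ z in 𝓝 (0 : ℝ × ℝ),
      |x1 z| ≤ ε * ‖z‖ ^ n ∧ |x2 z| ≤ ε * ‖z‖ ^ n) :
    ∀ᶠ p in 𝓝 (0 : ℝ × ℝ), p ≠ 0 → ∀ lam ∈ Set.Icc (-1 : ℝ) 1,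
      0 < A p + x1 p + lam * (B p + x2 p) ∧ A p + x1 p + lam * (B p + x2 p) < 1 := by
  -- A 0 = 0 and B 0 = 0
  have hA0 : A 0 = 0 := by
    have h := hAh 2 (by norm_num) 0
    rw [smul_zero] at h
    nlinarith [one_lt_pow₀ (by norm_num : (1:ℝ) < 2) (by omega : n ≠ 0)]
  have hB0 : B 0 = 0 := by
    have h := hBh 2 (by norm_num) 0
    rw [smul_zero] at h
    nlinarith [one_lt_pow₀ (by norm_num : (1:ℝ) < 2) (by omega : n ≠ 0)]
  -- minimum over sphere
  obtain ⟨v₀, hv₀, hmin⟩ := (isCompact_sphere (0 : ℝ × ℝ) 1).exists_isMinOn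
    (NormedSpace.sphere_nonempty.mpr zero_le_one)
    ((continuous_min.comp ((hAc.add hBc).prodMk (hAc.sub hBc))).continuousOn)
  set f : ℝ × ℝ → ℝ := fun v => min (A v + B v) (A v - B v) with hf
  set c : ℝ := f v₀ with hc
  have hv₀ne : v₀ ≠ 0 := by
    intro h
    have := Metric.mem_sphere.mp hv₀
    rw [h] at this; simp at this
  have hcpos : 0 < c := lt_min (hpos1 v₀ hv₀ne) (hpos2 v₀ hv₀ne)
  set ε : ℝ := min (c / 4) (1 / 8) with hε
  have hεpos : 0 < ε := lt_min (by linarith) (by norm_num)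
  have E1 := hsm ε hεpos
  have E2 : ∀ᶠ z in 𝓝 (0 : ℝ × ℝ), |A z| < 1 / 4 := by
    have h : Tendsto A (𝓝 0) (𝓝 0) := hA0 ▸ hAc.tendsto 0
    have := h.eventually (eventually_abs_sub_lt 0 (by norm_num : (0:ℝ) < 1/4))
    simpa using this
  have E3 : ∀ᶠ z in 𝓝 (0 : ℝ × ℝ), |B z| < 1 / 4 := by
    have h : Tendsto B (𝓝 0) (𝓝 0) := hB0 ▸ hBc.tendsto 0
    have := h.eventually (eventually_abs_sub_lt 0 (by norm_num : (0:ℝ) < 1/4))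
    simpa using this
  have E4 : ∀ᶠ z in 𝓝 (0 : ℝ × ℝ), ‖z‖ < 1 := by
    have := Metric.ball_mem_nhds (0 : ℝ × ℝ) one_pos
    filter_upwards [this] with z hz
    simpa [dist_eq_norm] using hz
  filter_upwards [E1, E2, E3, E4] with p h1 h2 h3 h4 hp lam hlam
  obtain ⟨hl1, hl2⟩ := hlam
  have hpn : 0 < ‖p‖ := norm_pos_iff.mpr hp
  set u : ℝ × ℝ := ‖p‖⁻¹ • p with hu
  have hupr : p = ‖p‖ • u := by
    rw [hu, smul_smul, mul_inv_cancel₀ (ne_of_gt hpn), one_smul]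
  have hunorm : ‖u‖ = 1 := by
    rw [hu, norm_smul, norm_inv, norm_norm, inv_mul_cancel₀ (ne_of_gt hpn)]
  have hune : u ≠ 0 := by
    intro h; rw [h, norm_zero] at hunorm; norm_num at hunorm
  have hcu : c ≤ f u := hmin (Metric.mem_sphere.mpr (by simpa [dist_eq_norm] using hunorm))
  have hcu1 : c ≤ A u + B u := le_trans hcu (min_le_left _ _)
  have hcu2 : c ≤ A u - B u := le_trans hcu (min_le_right _ _)
  have hAp : A p = ‖p‖ ^ n * A u := by
    conv_lhs => rw [hupr]
    exact hAh ‖p‖ (ne_of_gt hpn) u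
  have hBp : B p = ‖p‖ ^ n * B u := by
    conv_lhs => rw [hupr]
    exact hBh ‖p‖ (ne_of_gt hpn) u
  have hq1 : 0 ≤ (1 + lam) * (A u + B u - c) :=
    mul_nonneg (by linarith) (by linarith)
  have hq2 : 0 ≤ (1 - lam) * (A u - B u - c) :=
    mul_nonneg (by linarith) (by linarith)
  have hlin : c ≤ A u + lam * B u := by nlinarith
  have hpnpow : 0 < ‖p‖ ^ n := pow_pos hpn n
  have hscal : c * ‖p‖ ^ n ≤ A p + lam * B p := by
    rw [hAp, hBp]
    have := mul_le_mul_of_nonneg_left hlin (le_of_lt hpnpow)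
    nlinarith
  have hx1 : |x1 p| ≤ ε * ‖p‖ ^ n := h1.1
  have hx2l : |lam * x2 p| ≤ ε * ‖p‖ ^ n := by
    rw [abs_mul]
    calc |lam| * |x2 p| ≤ 1 * |x2 p| :=
          mul_le_mul_of_nonneg_right (abs_le.mpr ⟨hl1, hl2⟩) (abs_nonneg _)
      _ = |x2 p| := one_mul _
      _ ≤ ε * ‖p‖ ^ n := h1.2
  have hεc : ε * ‖p‖ ^ n ≤ c / 4 * ‖p‖ ^ n :=
    mul_le_mul_of_nonneg_right (min_le_left _ _) (le_of_lt hpnpow)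
  have hcp : 0 < c * ‖p‖ ^ n := mul_pos hcpos hpnpow
  have hexp : A p + x1 p + lam * (B p + x2 p)
      = (A p + lam * B p) + x1 p + lam * x2 p := by ring
  constructor
  · rw [hexp]
    have h1' : -(ε * ‖p‖ ^ n) ≤ x1 p := neg_le_of_abs_le hx1
    have h2' : -(ε * ‖p‖ ^ n) ≤ lam * x2 p := neg_le_of_abs_le hx2l
    linarith
  · rw [hexp]
    have hApb : A p ≤ |A p| := le_abs_self _
    have hlB : lam * B p ≤ |B p| := by
      calc lam * B p ≤ |lam * B p| := le_abs_self _
        _ = |lam| * |B p| := abs_mul _ _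
        _ ≤ 1 * |B p| := mul_le_mul_of_nonneg_right (abs_le.mpr ⟨hl1, hl2⟩) (abs_nonneg _)
        _ = |B p| := one_mul _
    have hpow1 : ‖p‖ ^ n ≤ 1 := pow_le_one₀ (norm_nonneg _) (le_of_lt h4)
    have hε18 : ε * ‖p‖ ^ n ≤ 1 / 8 := by
      calc ε * ‖p‖ ^ n ≤ 1 / 8 * ‖p‖ ^ n :=
            mul_le_mul_of_nonneg_right (min_le_right _ _) (le_of_lt hpnpow)
        _ ≤ 1 / 8 * 1 := by nlinarith
        _ = 1 / 8 := by norm_num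
    have h1' : x1 p ≤ ε * ‖p‖ ^ n := le_of_abs_le hx1
    have h2' : lam * x2 p ≤ ε * ‖p‖ ^ n := le_of_abs_le hx2l
    linarith


/-- The key inequality pair (2.1)–(2.2) of the paper: positive definiteness of the six
homogeneous forms built from the partials of P and Q, together with the higher-order
smallness of the partials of X and Y, gives a punctured neighborhood of the origin on
which 0 < ∂₁P − ∂₁X + λ(∂₂P − ∂₂X) < 1 and 0 < ∂₂Q + ∂₂Y + λ(∂₁Q + ∂₁Y) < 1 for all
λ ∈ [−1,1]. -/
theorem stmt_18 (P Q X Y : ℝ × ℝ → ℝ) (k k' : ℕ) (hk : 1 ≤ k) (hk' : 1 ≤ k')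
    (hPsm : ContDiff ℝ (⊤ : ℕ∞) P) (hQsm : ContDiff ℝ (⊤ : ℕ∞) Q)
    (hPhom : ∀ t : ℝ, ∀ z : ℝ × ℝ, P (t • z) = t ^ (2 * k + 1) * P z)
    (hQhom : ∀ t : ℝ, ∀ z : ℝ × ℝ, Q (t • z) = t ^ (2 * k' + 1) * Q z)
    (hX : ContDiff ℝ 1 X) (hY : ContDiff ℝ 1 Y)
    (hX0 : X (0, 0) = 0) (hY0 : Y (0, 0) = 0)
    (hXo : (fun z : ℝ × ℝ => fderiv ℝ X z) =o[𝓝 0] fun z : ℝ × ℝ => ‖z‖ ^ (2 * k))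
    (hYo : (fun z : ℝ × ℝ => fderiv ℝ Y z) =o[𝓝 0] fun z : ℝ × ℝ => ‖z‖ ^ (2 * k'))
    (hA : ∀ v : ℝ × ℝ, v ≠ 0 → 0 < fderiv ℝ P v (1, 0))
    (hB : ∀ v : ℝ × ℝ, v ≠ 0 → 0 < fderiv ℝ Q v (0, 1))
    (hC : ∀ v : ℝ × ℝ, v ≠ 0 → 0 < fderiv ℝ P v (1, 0) + fderiv ℝ P v (0, 1))
    (hD : ∀ v : ℝ × ℝ, v ≠ 0 → 0 < fderiv ℝ P v (1, 0) - fderiv ℝ P v (0, 1))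
    (hE : ∀ v : ℝ × ℝ, v ≠ 0 → 0 < fderiv ℝ Q v (0, 1) + fderiv ℝ Q v (1, 0))
    (hH : ∀ v : ℝ × ℝ, v ≠ 0 → 0 < fderiv ℝ Q v (0, 1) - fderiv ℝ Q v (1, 0)) :
    ∃ N ∈ 𝓝 (0 : ℝ × ℝ), ∀ p ∈ N, p ≠ 0 → ∀ lam ∈ Set.Icc (-1 : ℝ) 1,
      (0 < fderiv ℝ P p (1, 0) - fderiv ℝ X p (1, 0)
            + lam * (fderiv ℝ P p (0, 1) - fderiv ℝ X p (0, 1)) ∧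
        fderiv ℝ P p (1, 0) - fderiv ℝ X p (1, 0)
            + lam * (fderiv ℝ P p (0, 1) - fderiv ℝ X p (0, 1)) < 1) ∧
      (0 < fderiv ℝ Q p (0, 1) + fderiv ℝ Y p (0, 1)
            + lam * (fderiv ℝ Q p (1, 0) + fderiv ℝ Y p (1, 0)) ∧
        fderiv ℝ Q p (0, 1) + fderiv ℝ Y p (0, 1)
            + lam * (fderiv ℝ Q p (1, 0) + fderiv ℝ Y p (1, 0)) < 1) := by
  have hPd : Differentiable ℝ P := hPsm.differentiable (by simp)
  have hQd : Differentiable ℝ Q := hQsm.differentiable (by simp)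
  have hPfc : Continuous (fderiv ℝ P) := hPsm.continuous_fderiv (by simp)
  have hQfc : Continuous (fderiv ℝ Q) := hQsm.continuous_fderiv (by simp)
  have hnorm10 : ‖((1 : ℝ), (0 : ℝ))‖ = 1 := by
    simp [Prod.norm_def]
  have hnorm01 : ‖((0 : ℝ), (1 : ℝ))‖ = 1 := by
    simp [Prod.norm_def]
  -- smallness hypothesis for X
  have hsmX : ∀ ε : ℝ, 0 < ε → ∀ᶠ z in 𝓝 (0 : ℝ × ℝ),
      |(-(fderiv ℝ X z (1, 0)))| ≤ ε * ‖z‖ ^ (2 * k) ∧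
      |(-(fderiv ℝ X z (0, 1)))| ≤ ε * ‖z‖ ^ (2 * k) := by
    intro ε hε
    filter_upwards [hXo.def hε] with z hz
    have hz' : ‖fderiv ℝ X z‖ ≤ ε * ‖z‖ ^ (2 * k) := by
      simpa [abs_of_nonneg (pow_nonneg (norm_nonneg z) (2 * k))] using hz
    constructor
    · rw [abs_neg]
      calc |fderiv ℝ X z (1, 0)| ≤ ‖fderiv ℝ X z‖ * ‖((1 : ℝ), (0 : ℝ))‖ :=
            (fderiv ℝ X z).le_opNorm _
        _ = ‖fderiv ℝ X z‖ := by rw [hnorm10, mul_one]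
        _ ≤ ε * ‖z‖ ^ (2 * k) := hz'
    · rw [abs_neg]
      calc |fderiv ℝ X z (0, 1)| ≤ ‖fderiv ℝ X z‖ * ‖((0 : ℝ), (1 : ℝ))‖ :=
            (fderiv ℝ X z).le_opNorm _
        _ = ‖fderiv ℝ X z‖ := by rw [hnorm01, mul_one]
        _ ≤ ε * ‖z‖ ^ (2 * k) := hz'
  have hsmY : ∀ ε : ℝ, 0 < ε → ∀ᶠ z in 𝓝 (0 : ℝ × ℝ),
      |fderiv ℝ Y z (0, 1)| ≤ ε * ‖z‖ ^ (2 * k') ∧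
      |fderiv ℝ Y z (1, 0)| ≤ ε * ‖z‖ ^ (2 * k') := by
    intro ε hε
    filter_upwards [hYo.def hε] with z hz
    have hz' : ‖fderiv ℝ Y z‖ ≤ ε * ‖z‖ ^ (2 * k') := by
      simpa [abs_of_nonneg (pow_nonneg (norm_nonneg z) (2 * k'))] using hz
    constructor
    · calc |fderiv ℝ Y z (0, 1)| ≤ ‖fderiv ℝ Y z‖ * ‖((0 : ℝ), (1 : ℝ))‖ :=
            (fderiv ℝ Y z).le_opNorm _
        _ = ‖fderiv ℝ Y z‖ := by rw [hnorm01, mul_one]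
        _ ≤ ε * ‖z‖ ^ (2 * k') := hz'
    · calc |fderiv ℝ Y z (1, 0)| ≤ ‖fderiv ℝ Y z‖ * ‖((1 : ℝ), (0 : ℝ))‖ :=
            (fderiv ℝ Y z).le_opNorm _
        _ = ‖fderiv ℝ Y z‖ := by rw [hnorm10, mul_one]
        _ ≤ ε * ‖z‖ ^ (2 * k') := hz'
  have hPev := key (2 * k) (by omega)
    (fun z => fderiv ℝ P z (1, 0)) (fun z => fderiv ℝ P z (0, 1))
    (fun z => -(fderiv ℝ X z (1, 0))) (fun z => -(fderiv ℝ X z (0, 1)))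
    (hPfc.clm_apply continuous_const) (hPfc.clm_apply continuous_const)
    (fun t ht z => fderiv_homog hPd hPhom ht z _)
    (fun t ht z => fderiv_homog hPd hPhom ht z _)
    hC hD hsmX
  have hQev := key (2 * k') (by omega)
    (fun z => fderiv ℝ Q z (0, 1)) (fun z => fderiv ℝ Q z (1, 0))
    (fun z => fderiv ℝ Y z (0, 1)) (fun z => fderiv ℝ Y z (1, 0))
    (hQfc.clm_apply continuous_const) (hQfc.clm_apply continuous_const)
    (fun t ht z => fderiv_homog hQd hQhom ht z _)
    (fun t ht z => fderiv_homog hQd hQhom ht z _)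
    hE hH hsmY
  obtain ⟨N, hN, hprop⟩ := (hPev.and hQev).exists_mem
  refine ⟨N, hN, fun p hp hpne lam hlam => ?_⟩
  obtain ⟨h1, h2⟩ := hprop p hp
  have h1' := h1 hpne lam hlam
  have h2' := h2 hpne lam hlam
  exact ⟨by simpa [sub_eq_add_neg] using h1', h2'⟩
end
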